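/- arXiv:1408.4157 — 3 statements merged into one kernel-verified Lean document; each statement's English description precedes it below -/
import Mathlib

section
/- For d-dimensional tensor-product orthonormal Legendre polynomials of total order at most p, the supremum over ξ ∈ [-1,1]^d of max_{‖k‖₁ ≤ p} |ψ_k(ξ)|² is at most (2p/d + 1)^d, and consequently at most exp(2p). -/
/-!
Let `P = Pₙ` with `n ≥ 1` and `c = n(n+1)`. Legendre's equation `(x²-1)P'' + 2xP' = cP` gives
`Q' = 2xP'²` for `Q = cP² + (1-x²)P'²`, so on `[-1,1]` the function `Q` is largest at `±1`, where
it equals `cP(±1)² = c`. Since `cP² ≤ Q` there, `|Pₙ| ≤ 1` and `ψₙ² ≤ 2n+1`. For the product,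
AM-GM gives `∏ (2kᵢ+1) ≤ (∑ (2kᵢ+1) / d)^d ≤ (2p/d + 1)^d`, and `(1 + 2p/d)^d ≤ exp(2p)`.
-/

open Polynomial Set

/-- The classical Legendre polynomial of degree `k`, via the Rodrigues formula. -/
noncomputable def legendre (k : ℕ) : Polynomial ℝ :=
  ((1 : ℝ) / (2 ^ k * k.factorial)) • derivative^[k] ((X ^ 2 - 1) ^ k)

/-- The orthonormalized Legendre polynomial with respect to the uniform
probability measure on `[-1,1]`. -/
noncomputable def legendreOrtho (k : ℕ) : Polynomial ℝ :=
  Real.sqrt (2 * k + 1) • legendre k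

theorem Real.prod_le_sum_div_card_pow {ι : Type*} (s : Finset ι) {z : ι → ℝ}
    (hz : ∀ i ∈ s, 0 ≤ z i) : ∏ i ∈ s, z i ≤ ((∑ i ∈ s, z i) / s.card) ^ s.card := by
  rcases s.eq_empty_or_nonempty with rfl | hs
  · simp
  have amgm := Real.geom_mean_le_arith_mean s (fun _ ↦ 1) z (fun _ _ ↦ zero_le_one)
    (by simpa using hs) hz
  simp only [Real.rpow_one, one_mul, Finset.sum_const, nsmul_eq_mul, mul_one] at amgm
  calc ∏ i ∈ s, z i = ((∏ i ∈ s, z i) ^ ((s.card : ℝ)⁻¹)) ^ s.card :=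
        (Real.rpow_inv_natCast_pow (Finset.prod_nonneg hz) hs.card_ne_zero).symm
    _ ≤ ((∑ i ∈ s, z i) / s.card) ^ s.card :=
        pow_le_pow_left₀ (Real.rpow_nonneg (Finset.prod_nonneg hz) _) amgm _

theorem le_max_of_mul_deriv_nonneg {f : ℝ → ℝ} (hf : Differentiable ℝ f)
    (hf' : ∀ y, 0 ≤ y * deriv f y) {a b x : ℝ} (hx : x ∈ Icc a b) :
    f x ≤ max (f a) (f b) := by
  rcases le_total x 0 with hx0 | hx0
  · have hanti : AntitoneOn f (Iic 0) := antitoneOn_of_deriv_nonpos (convex_Iic 0)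
      hf.continuous.continuousOn hf.differentiableOn fun y hy ↦ by
        rw [interior_Iic] at hy
        exact nonpos_of_mul_nonneg_right (hf' y) hy
    exact le_max_of_le_left (hanti (hx.1.trans hx0) hx0 hx.1)
  · have hmono : MonotoneOn f (Ici 0) := monotoneOn_of_deriv_nonneg (convex_Ici 0)
      hf.continuous.continuousOn hf.differentiableOn fun y hy ↦ by
        rw [interior_Ici] at hy
        exact nonneg_of_mul_nonneg_right (hf' y) hy
    exact le_max_of_le_right (hmono hx0 (hx0.trans hx.2) hx.2)

namespace Polynomial

variable {R : Type*} [CommRing R]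

theorem X_sq_sub_one_pow_eq (n : ℕ) :
    ((X : R[X]) ^ 2 - 1) ^ n = (X - C 1) ^ n * (X - C (-1)) ^ n := by
  rw [← mul_pow]
  simp only [map_one, map_neg, sub_neg_eq_add]
  ring

theorem derivative_X_sq_sub_one_pow_mul (n : ℕ) :
    derivative (((X : R[X]) ^ 2 - 1) ^ n) * (X ^ 2 - 1)
      = (2 * n) • (((X : R[X]) ^ 2 - 1) ^ n * X) := by
  rcases n with _ | n
  · simp
  · simp only [derivative_pow, derivative_sub, derivative_one, map_natCast, derivative_X,
      Nat.add_sub_cancel, nsmul_eq_mul]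
    push_cast
    ring

theorem iterate_derivative_X_sq_sub_one_pow_ode (n : ℕ) :
    (X ^ 2 - 1) * derivative^[n + 2] (((X : R[X]) ^ 2 - 1) ^ n)
        + 2 * X * derivative^[n + 1] (((X : R[X]) ^ 2 - 1) ^ n)
      = (n * (n + 1) : R[X]) * derivative^[n] (((X : R[X]) ^ 2 - 1) ^ n) := by
  have h := congrArg (derivative^[n + 1]) (derivative_X_sq_sub_one_pow_mul (R := R) n)
  set u : R[X] := (X ^ 2 - 1) ^ n
  rw [show derivative u * (X ^ 2 - 1) = derivative u * X * X - derivative u by ring,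
    iterate_derivative_sub, iterate_derivative_mul_X, iterate_derivative_derivative_mul_X,
    iterate_derivative_derivative_mul_X, iterate_derivative_smul, iterate_derivative_mul_X,
    Nat.add_sub_cancel, ← Function.iterate_succ_apply] at h
  linear_combination h

theorem eval_iterate_derivative_X_sub_C_pow_mul (n : ℕ) (a b : R) :
    (derivative^[n] ((X - C a) ^ n * (X - C b) ^ n)).eval a = n.factorial * (a - b) ^ n := by
  rw [iterate_derivative_mul, eval_finsetSum, Finset.sum_eq_single 0]
  · simp [iterate_derivative_X_sub_pow_self]
  · intro k hk hk0
    rw [iterate_derivative_X_sub_pow, Nat.sub_sub_self (by simpa [Nat.lt_succ_iff] using hk)]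
    simp [zero_pow hk0]
  · simp

theorem sq_eval_le_of_legendre_ode {P : ℝ[X]} {c M x : ℝ} (hc : 0 < c)
    (hode : (X ^ 2 - 1) * derivative (derivative P) + 2 * X * derivative P = C c * P)
    (hP1 : P.eval 1 ^ 2 ≤ M) (hPm1 : P.eval (-1) ^ 2 ≤ M) (hx : x ∈ Icc (-1) 1) :
    P.eval x ^ 2 ≤ M := by
  set Q : ℝ[X] := C c * P ^ 2 + (1 - X ^ 2) * derivative P ^ 2
  have hQ' : derivative Q = 2 * X * derivative P ^ 2 := by
    simp only [Q, derivative_add, derivative_C, derivative_sq, derivative_mul, derivative_sub,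
      derivative_one, derivative_X, C_ofNat]
    linear_combination (-2 * derivative P) * hode
  have hQ : Q.eval x ≤ max (Q.eval (-1)) (Q.eval 1) :=
    le_max_of_mul_deriv_nonneg Q.differentiable (fun y ↦ by
      rw [Polynomial.deriv, hQ']
      simp only [eval_mul, eval_pow, eval_X, eval_ofNat]
      nlinarith [sq_nonneg (y * (derivative P).eval y)]) hx
  have hQ_ge : c * P.eval x ^ 2 ≤ Q.eval x := by
    have : 0 ≤ 1 - x ^ 2 := by nlinarith [hx.1, hx.2]
    simp only [Q, eval_add, eval_mul, eval_C, eval_pow, eval_sub, eval_one, eval_X]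
    nlinarith [mul_nonneg this (sq_nonneg ((derivative P).eval x))]
  have hQ1 : Q.eval 1 = c * P.eval 1 ^ 2 := by simp [Q]
  have hQm1 : Q.eval (-1) = c * P.eval (-1) ^ 2 := by simp [Q]
  rw [hQm1, hQ1] at hQ
  have hcM : c * P.eval x ^ 2 ≤ c * M := hQ_ge.trans (hQ.trans (max_le (by gcongr) (by gcongr)))
  exact le_of_mul_le_mul_left hcM hc

end Polynomial

theorem legendre_ode (n : ℕ) :
    (X ^ 2 - 1) * derivative (derivative (legendre n)) + 2 * X * derivative (legendre n)
      = C ((n : ℝ) * (n + 1)) * legendre n := by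
  have h := iterate_derivative_X_sq_sub_one_pow_ode (R := ℝ) n
  simp only [legendre, smul_eq_C_mul, derivative_C_mul, ← Function.iterate_succ_apply' derivative,
    map_mul, map_natCast, map_add, map_one]
  linear_combination C (1 / (2 ^ n * n.factorial : ℝ)) * h

theorem legendre_eval_one (n : ℕ) : (legendre n).eval 1 = 1 := by
  rw [legendre, eval_smul, X_sq_sub_one_pow_eq, eval_iterate_derivative_X_sub_C_pow_mul,
    smul_eq_mul]
  norm_num
  field_simp

theorem legendre_eval_neg_one (n : ℕ) : (legendre n).eval (-1) = (-1) ^ n := by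
  rw [legendre, eval_smul, X_sq_sub_one_pow_eq, mul_comm ((X - C 1) ^ n),
    eval_iterate_derivative_X_sub_C_pow_mul, show (-1 - 1 : ℝ) = -1 * 2 by norm_num, mul_pow,
    smul_eq_mul]
  field_simp

theorem sq_eval_legendre_le_one (n : ℕ) {x : ℝ} (hx : x ∈ Icc (-1) 1) :
    (legendre n).eval x ^ 2 ≤ 1 := by
  rcases n.eq_zero_or_pos with rfl | hn
  · simp [legendre]
  exact sq_eval_le_of_legendre_ode (by positivity) (legendre_ode n)
    (by simp [legendre_eval_one]) (by simp [legendre_eval_neg_one, ← pow_mul]) hx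

theorem sq_eval_legendreOrtho_le (n : ℕ) {x : ℝ} (hx : x ∈ Icc (-1) 1) :
    (legendreOrtho n).eval x ^ 2 ≤ 2 * n + 1 := by
  rw [legendreOrtho, eval_smul, smul_eq_mul, mul_pow, Real.sq_sqrt (by positivity)]
  exact mul_le_of_le_one_right (by positivity) (sq_eval_legendre_le_one n hx)

theorem legendre_tensor_bound_general (d p : ℕ)
    (k : Fin d → ℕ) (hk : ∑ i, k i ≤ p)
    (ξ : Fin d → ℝ) (hξ : ∀ i, ξ i ∈ Icc (-1 : ℝ) 1) :
    (∏ i, (legendreOrtho (k i)).eval (ξ i)) ^ 2 ≤ (2 * p / d + 1 : ℝ) ^ d ∧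
    (2 * p / d + 1 : ℝ) ^ d ≤ Real.exp (2 * p) := by
  have hmean : (∑ i, (2 * k i + 1 : ℝ)) / d ≤ 2 * p / d + 1 := by
    have : (∑ i, (k i : ℝ)) ≤ p := by exact_mod_cast hk
    rw [Finset.sum_add_distrib, ← Finset.mul_sum, add_div]
    simp only [Finset.sum_const, Finset.card_univ, Fintype.card_fin, nsmul_eq_mul, mul_one]
    gcongr
    exact div_self_le_one _
  refine ⟨?_, ?_⟩
  · calc (∏ i, (legendreOrtho (k i)).eval (ξ i)) ^ 2
        = ∏ i, (legendreOrtho (k i)).eval (ξ i) ^ 2 := (Finset.prod_pow _ _ _).symm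
      _ ≤ ∏ i, (2 * k i + 1 : ℝ) := Finset.prod_le_prod (fun i _ ↦ sq_nonneg _)
          (fun i _ ↦ sq_eval_legendreOrtho_le (k i) (hξ i))
      _ ≤ ((∑ i, (2 * k i + 1 : ℝ)) / d) ^ d := by
          simpa using Real.prod_le_sum_div_card_pow Finset.univ
            (z := fun i ↦ (2 * k i + 1 : ℝ)) (fun i _ ↦ by positivity)
      _ ≤ (2 * p / d + 1 : ℝ) ^ d := by gcongr
  · convert Real.one_sub_div_pow_le_exp_neg (n := d) (t := -(2 * p))
      ((neg_nonpos.2 (by positivity)).trans d.cast_nonneg) using 1 <;> ring_nf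

/-- For tensor-product orthonormal Legendre polynomials of total order `≤ p`,
`|ψ_k(ξ)|² ≤ (2p/d+1)^d ≤ exp(2p)` on `[-1,1]^d`. -/
theorem legendre_tensor_bound (d p : ℕ) (hd : 0 < d)
    (k : Fin d → ℕ) (hk : ∑ i, k i ≤ p)
    (ξ : Fin d → ℝ) (hξ : ∀ i, ξ i ∈ Icc (-1 : ℝ) 1) :
    (∏ i, (legendreOrtho (k i)).eval (ξ i)) ^ 2 ≤ (2 * p / d + 1 : ℝ) ^ d ∧
    (2 * p / d + 1 : ℝ) ^ d ≤ Real.exp (2 * p) :=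
  legendre_tensor_bound_general d p k hk ξ hξ
end

section
/- Suppose functions ψ_1, ..., ψ_P on a probability space (S, ν) satisfy sup_{k} sup_{ξ∈S} |ψ_k(ξ)|/B(ξ) = 1 where B(ξ) = max_{k=1:P} |ψ_k(ξ)| > 0 ν-a.e., and 0 < ∫_S B² dν < ∞. Let c = (∫_S B² dν)^{-1/2}. Then for the sampling density proportional to B² dν with weight w = 1/(cB), the coherence sup_{k, ξ∈S} |w(ξ)ψ_k(ξ)|² equals c^{-2} = ∫_S B² dν; moreover, for any other measurable envelope B̂ : S → (0,∞) with 0 < ∫_S B̂² dν < ∞ that differs from a positive multiple of B on a set of positive ν-measure, the corresponding coherence sup_{k, ξ∈S} |ψ_k(ξ)/(ĉ B̂(ξ))|² with ĉ = (∫_S B̂² dν)^{-1/2} is strictly greater than ∫_S B² dν. -/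
/-!
Since `ψ_k / (c G)` is maximised over `k` by the envelope, the coherence of the weight `G`
is `sup_ξ (B ξ / (c G ξ))²`. For `G = B` this is the constant `c⁻² = ∫ B²`. If some other
`B̂` did no worse, then `c B ≤ ĉ B̂` pointwise; both sides have unit `L²` norm, so they agree
almost everywhere and `B̂ = (c / ĉ) B` a.e.
-/

open MeasureTheory ENNReal

section

variable {α ι : Type*}

lemma iSup_ofReal_sq_div [Finite ι] [Nonempty ι] (f : ι → ℝ) (a : ℝ) :
    ⨆ k, ENNReal.ofReal ((f k / a) ^ 2) = ENNReal.ofReal (((⨆ k, |f k|) / a) ^ 2) := by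
  have hsq (x : ℝ) : (x / a) ^ 2 = (|x| / a) ^ 2 := by rw [div_pow, div_pow, sq_abs]
  obtain ⟨k₀, hk₀⟩ := exists_eq_ciSup_of_finite (ι := ι) (f := fun k => |f k|)
  refine le_antisymm (iSup_le fun k => ENNReal.ofReal_le_ofReal ?_) (le_iSup_of_le k₀ ?_)
  · rw [hsq, div_pow, div_pow]
    gcongr
    exact le_ciSup (Set.finite_range fun k => |f k|).bddAbove k
  · rw [hsq (f k₀), hk₀]

lemma mul_le_of_ofReal_sq_div_le_ofReal_inv_sq {b c d : ℝ} (hc : 0 < c) (hb : 0 ≤ b)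
    (hd : 0 < d) (h : ENNReal.ofReal ((b / d) ^ 2) ≤ ENNReal.ofReal (c⁻¹ ^ 2)) : c * b ≤ d := by
  rw [ENNReal.ofReal_le_ofReal_iff (by positivity),
    pow_le_pow_iff_left₀ (by positivity) (by positivity) two_ne_zero, div_le_iff₀ hd] at h
  exact (le_inv_mul_iff₀ hc).1 h

lemma iSup_iSup_ofReal_sq_div [Finite ι] [Nonempty ι] (ψ : ι → α → ℝ) (g : α → ℝ) :
    ⨆ k, ⨆ ξ, ENNReal.ofReal ((ψ k ξ / g ξ) ^ 2) =
      ⨆ ξ, ENNReal.ofReal (((⨆ k, |ψ k ξ|) / g ξ) ^ 2) := by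
  rw [iSup_comm]
  simp_rw [iSup_ofReal_sq_div]

lemma ae_eq_of_le_of_integral_sq_eq [MeasurableSpace α] {μ : Measure α} {f g : α → ℝ}
    (hf : 0 ≤ᵐ[μ] f) (hfg : f ≤ᵐ[μ] g) (hf2 : Integrable (fun x => f x ^ 2) μ)
    (hg2 : Integrable (fun x => g x ^ 2) μ) (h : ∫ x, f x ^ 2 ∂μ = ∫ x, g x ^ 2 ∂μ) :
    f =ᵐ[μ] g := by
  have hsq_le : (fun x => f x ^ 2) ≤ᵐ[μ] fun x => g x ^ 2 := by
    filter_upwards [hf, hfg] with x h₀ h₁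
    gcongr
  have hsq : (fun x => f x ^ 2) =ᵐ[μ] fun x => g x ^ 2 :=
    (integral_eq_iff_of_ae_le hf2 hg2 hsq_le).1 h
  filter_upwards [hf, hfg, hsq] with x h₀ h₁ h₂
  exact (pow_left_inj₀ h₀ (h₀.trans h₁) two_ne_zero).1 h₂

lemma integral_sq_inv_sqrt_integral_sq_mul [MeasurableSpace α] {μ : Measure α} {G : α → ℝ}
    (hG : 0 < ∫ x, G x ^ 2 ∂μ) :
    ∫ x, ((√(∫ y, G y ^ 2 ∂μ))⁻¹ * G x) ^ 2 ∂μ = 1 := by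
  simp_rw [mul_pow, integral_const_mul, inv_pow, Real.sq_sqrt hG.le]
  exact inv_mul_cancel₀ hG.ne'

end

theorem coherence_optimal_sampling_general
    {α : Type*} [MeasurableSpace α] (ν : Measure α)
    (P : ℕ) (hP : 0 < P) (ψ : Fin P → α → ℝ)
    (B : α → ℝ) (hB : ∀ ξ, B ξ = ⨆ k : Fin P, |ψ k ξ|)
    (hBpos : ∀ ξ, 0 < B ξ)
    (hBint : Integrable (fun ξ => B ξ ^ 2) ν)
    (hBintpos : 0 < ∫ ξ, B ξ ^ 2 ∂ν)
    (c : ℝ) (hc : c = (Real.sqrt (∫ ξ, B ξ ^ 2 ∂ν))⁻¹) :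
    (⨆ k : Fin P, ⨆ ξ : α, ENNReal.ofReal ((ψ k ξ / (c * B ξ)) ^ 2)) =
        ENNReal.ofReal (∫ ξ, B ξ ^ 2 ∂ν) ∧
    ∀ (Bhat : α → ℝ), Measurable Bhat → (∀ ξ, 0 < Bhat ξ) →
      Integrable (fun ξ => Bhat ξ ^ 2) ν → 0 < ∫ ξ, Bhat ξ ^ 2 ∂ν →
      (∀ t : ℝ, 0 < t → 0 < ν {ξ | Bhat ξ ≠ t * B ξ}) →
      ∀ chat : ℝ, chat = (Real.sqrt (∫ ξ, Bhat ξ ^ 2 ∂ν))⁻¹ →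
      ENNReal.ofReal (∫ ξ, B ξ ^ 2 ∂ν) <
        ⨆ k : Fin P, ⨆ ξ : α, ENNReal.ofReal ((ψ k ξ / (chat * Bhat ξ)) ^ 2) := by
  have : Nonempty (Fin P) := Fin.pos_iff_nonempty.mp hP
  have hcpos : 0 < c := hc ▸ inv_pos.2 (Real.sqrt_pos.2 hBintpos)
  have hc_inv_sq : c⁻¹ ^ 2 = ∫ ξ, B ξ ^ 2 ∂ν := by rw [hc, inv_inv, Real.sq_sqrt hBintpos.le]
  simp_rw [iSup_iSup_ofReal_sq_div, ← hB]
  constructor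
  · have : Nonempty α := not_isEmpty_iff.1 fun _ => by simp [integral_of_isEmpty] at hBintpos
    have hconst (ξ : α) : (B ξ / (c * B ξ)) ^ 2 = ∫ ξ, B ξ ^ 2 ∂ν := by
      rw [div_mul_cancel_right₀ (hBpos ξ).ne', hc_inv_sq]
    simp_rw [hconst, ciSup_const]
  · intro Bhat _ hBhatpos hBhatint hBhatintpos hdiff chat hchat
    by_contra! hcoh
    have hchatpos : 0 < chat := hchat ▸ inv_pos.2 (Real.sqrt_pos.2 hBhatintpos)
    have hle (ξ : α) : c * B ξ ≤ chat * Bhat ξ :=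
      mul_le_of_ofReal_sq_div_le_ofReal_inv_sq hcpos (hBpos ξ).le
        (mul_pos hchatpos (hBhatpos ξ)) (hc_inv_sq ▸ (le_iSup _ ξ).trans hcoh)
    have hae : (fun ξ => c * B ξ) =ᵐ[ν] fun ξ => chat * Bhat ξ := by
      refine ae_eq_of_le_of_integral_sq_eq (ae_of_all _ fun ξ => (mul_pos hcpos (hBpos ξ)).le)
        (ae_of_all _ hle) ?_ ?_ ?_
      · simpa only [mul_pow] using hBint.const_mul (c ^ 2)
      · simpa only [mul_pow] using hBhatint.const_mul (chat ^ 2)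
      · rw [hc, hchat, integral_sq_inv_sqrt_integral_sq_mul hBintpos,
          integral_sq_inv_sqrt_integral_sq_mul hBhatintpos]
    refine (hdiff (c / chat) (div_pos hcpos hchatpos)).ne' (measure_eq_zero_iff_ae_notMem.2 ?_)
    filter_upwards [hae] with ξ hξ
    simp only [not_not]
    rw [div_mul_eq_mul_div, hξ, mul_div_cancel_left₀ _ hchatpos.ne']

/-- Coherence-optimality of sampling proportional to the envelope `B`:
with `B ξ = max_k |ψ_k ξ|` and `c = (∫ B² dν)^{-1/2}`, the coherence of the
sampling with envelope `B` equals `∫ B² dν`, and any other envelope `B̂`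
that is not a.e. a positive multiple of `B` (up to sets of measure zero)
has strictly larger coherence. -/
theorem coherence_optimal_sampling
    {α : Type*} [MeasurableSpace α] (ν : Measure α) [IsProbabilityMeasure ν]
    (P : ℕ) (hP : 0 < P) (ψ : Fin P → α → ℝ)
    (hψ : ∀ k, Measurable (ψ k))
    (B : α → ℝ) (hB : ∀ ξ, B ξ = ⨆ k : Fin P, |ψ k ξ|)
    (hBpos : ∀ ξ, 0 < B ξ)
    (hBsup : (⨆ k : Fin P, ⨆ ξ : α, |ψ k ξ| / B ξ) = 1)
    (hBint : Integrable (fun ξ => B ξ ^ 2) ν)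
    (hBintpos : 0 < ∫ ξ, B ξ ^ 2 ∂ν)
    (c : ℝ) (hc : c = (Real.sqrt (∫ ξ, B ξ ^ 2 ∂ν))⁻¹) :
    (⨆ k : Fin P, ⨆ ξ : α, ENNReal.ofReal ((ψ k ξ / (c * B ξ)) ^ 2)) =
        ENNReal.ofReal (∫ ξ, B ξ ^ 2 ∂ν) ∧
    ∀ (Bhat : α → ℝ), Measurable Bhat → (∀ ξ, 0 < Bhat ξ) →
      Integrable (fun ξ => Bhat ξ ^ 2) ν → 0 < ∫ ξ, Bhat ξ ^ 2 ∂ν →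
      (∀ t : ℝ, 0 < t → 0 < ν {ξ | Bhat ξ ≠ t * B ξ}) →
      ∀ chat : ℝ, chat = (Real.sqrt (∫ ξ, Bhat ξ ^ 2 ∂ν))⁻¹ →
      ENNReal.ofReal (∫ ξ, B ξ ^ 2 ∂ν) <
        ⨆ k : Fin P, ⨆ ξ : α, ENNReal.ofReal ((ψ k ξ / (chat * Bhat ξ)) ^ 2) :=
  coherence_optimal_sampling_general ν P hP ψ B hB hBpos hBint hBintpos c hc
end

section
/- For any measurable functions ψ_1, ..., ψ_P on a probability space (S, ν), and any measurable G : S → (0,∞) with ∫_S G² dν < ∞, the coherence μ(G) := (sup_{k, ξ∈S} |ψ_k(ξ)|²/G(ξ)²) · ∫_S G² dν satisfies μ(G) ≥ ∫_S B² dν where B(ξ) = max_{k=1:P}|ψ_k(ξ)|, with equality when G = B. -/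
/-!
Write `s` for the supremum of the ratios `ψ_k(ξ)² / G(ξ)²`. Pointwise
`ψ_k(ξ)² = (ψ_k(ξ)² / G(ξ)²) · G(ξ)² ≤ s · G(ξ)²`; choosing `k` with `|ψ_k(ξ)| = B(ξ)` and
integrating gives `∫ B² ≤ s · ∫ G² = μ(G)`. For `G = B` every ratio is at most `1`, so
`μ(B) ≤ ∫ B²`, and the first part gives the reverse inequality.
-/

open MeasureTheory ENNReal

section

variable {ι α : Type*}

noncomputable def coherence [MeasurableSpace α] (ν : Measure α) (ψ : ι → α → ℝ) (G : α → ℝ) :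
    ℝ≥0∞ :=
  (⨆ k, ⨆ ξ, ENNReal.ofReal (ψ k ξ ^ 2 / G ξ ^ 2)) * ENNReal.ofReal (∫ ξ, G ξ ^ 2 ∂ν)

theorem ofReal_sq_le_iSup_sq_div_mul (ψ : ι → α → ℝ) {G : α → ℝ} {ξ : α} (hG : G ξ ≠ 0)
    (k : ι) :
    ENNReal.ofReal (ψ k ξ ^ 2) ≤
      (⨆ j, ⨆ η, ENNReal.ofReal (ψ j η ^ 2 / G η ^ 2)) * ENNReal.ofReal (G ξ ^ 2) := by
  calc ENNReal.ofReal (ψ k ξ ^ 2)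
      = ENNReal.ofReal (ψ k ξ ^ 2 / G ξ ^ 2) * ENNReal.ofReal (G ξ ^ 2) := by
        rw [← ENNReal.ofReal_mul (by positivity), div_mul_cancel₀ _ (pow_ne_zero 2 hG)]
    _ ≤ _ := by
        gcongr
        exact le_iSup₂_of_le (f := fun j η => ENNReal.ofReal (ψ j η ^ 2 / G η ^ 2)) k ξ le_rfl

theorem ofReal_iSup_abs_sq_le [Finite ι] [Nonempty ι] (ψ : ι → α → ℝ) {G : α → ℝ}
    {ξ : α} (hG : G ξ ≠ 0) :
    ENNReal.ofReal ((⨆ k, |ψ k ξ|) ^ 2) ≤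
      (⨆ j, ⨆ η, ENNReal.ofReal (ψ j η ^ 2 / G η ^ 2)) * ENNReal.ofReal (G ξ ^ 2) := by
  obtain ⟨k, hk⟩ := exists_eq_ciSup_of_finite (f := fun k => |ψ k ξ|)
  rw [← hk, sq_abs]
  exact ofReal_sq_le_iSup_sq_div_mul ψ hG k

theorem iSup_sq_div_iSup_abs_sq_le_one [Finite ι] (ψ : ι → α → ℝ)
    (hpos : ∀ ξ, 0 < ⨆ k, |ψ k ξ|) :
    ⨆ j, ⨆ ξ, ENNReal.ofReal (ψ j ξ ^ 2 / (⨆ k, |ψ k ξ|) ^ 2) ≤ 1 := by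
  refine iSup₂_le fun j ξ => ENNReal.ofReal_le_one.mpr ?_
  rw [div_le_one (pow_pos (hpos ξ) 2), ← sq_abs (ψ j ξ)]
  exact pow_le_pow_left₀ (abs_nonneg _)
    (le_ciSup (Finite.bddAbove_range fun k => |ψ k ξ|) j) 2

theorem ofReal_integral_le_mul_ofReal_integral [MeasurableSpace α] {ν : Measure α}
    {f g : α → ℝ} {c : ℝ≥0∞} (hf : 0 ≤ f) (hg : Integrable g ν) (hg₀ : 0 ≤ g)
    (hfg : ∀ ξ, ENNReal.ofReal (f ξ) ≤ c * ENNReal.ofReal (g ξ)) :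
    ENNReal.ofReal (∫ ξ, f ξ ∂ν) ≤ c * ENNReal.ofReal (∫ ξ, g ξ ∂ν) :=
  calc ENNReal.ofReal (∫ ξ, f ξ ∂ν)
      ≤ ∫⁻ ξ, ‖f ξ‖ₑ ∂ν :=
        (Real.ofReal_le_enorm _).trans (enorm_integral_le_lintegral_enorm f)
    _ ≤ ∫⁻ ξ, c * ENNReal.ofReal (g ξ) ∂ν :=
        lintegral_mono fun ξ => (Real.enorm_of_nonneg (hf ξ)).trans_le (hfg ξ)
    _ = c * ENNReal.ofReal (∫ ξ, g ξ ∂ν) := by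
        rw [lintegral_const_mul'' c hg.aemeasurable.ennreal_ofReal,
          ofReal_integral_eq_lintegral_ofReal hg (Filter.Eventually.of_forall hg₀)]

theorem ofReal_integral_iSup_abs_sq_le_coherence [MeasurableSpace α] [Finite ι] [Nonempty ι]
    (ν : Measure α) (ψ : ι → α → ℝ) {G : α → ℝ} (hG : ∀ ξ, G ξ ≠ 0)
    (hGint : Integrable (fun ξ => G ξ ^ 2) ν) :
    ENNReal.ofReal (∫ ξ, (⨆ k, |ψ k ξ|) ^ 2 ∂ν) ≤ coherence ν ψ G :=
  ofReal_integral_le_mul_ofReal_integral (fun _ => sq_nonneg _) hGint (fun _ => sq_nonneg _)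
    fun ξ => ofReal_iSup_abs_sq_le ψ (hG ξ)

end

theorem coherence_lower_bound_general
    {α : Type*} [MeasurableSpace α] (ν : Measure α)
    (P : ℕ) (hP : 0 < P) (ψ : Fin P → α → ℝ)
    (B : α → ℝ) (hB : ∀ ξ, B ξ = ⨆ k : Fin P, |ψ k ξ|)
    (hBpos : ∀ ξ, 0 < B ξ)
    (hBint : Integrable (fun ξ => B ξ ^ 2) ν) :
    (∀ G : α → ℝ, Measurable G → (∀ ξ, 0 < G ξ) →
      Integrable (fun ξ => G ξ ^ 2) ν →
      ENNReal.ofReal (∫ ξ, B ξ ^ 2 ∂ν) ≤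
        (⨆ k : Fin P, ⨆ ξ : α, ENNReal.ofReal (ψ k ξ ^ 2 / G ξ ^ 2)) *
          ENNReal.ofReal (∫ ξ, G ξ ^ 2 ∂ν)) ∧
    (⨆ k : Fin P, ⨆ ξ : α, ENNReal.ofReal (ψ k ξ ^ 2 / B ξ ^ 2)) *
        ENNReal.ofReal (∫ ξ, B ξ ^ 2 ∂ν) =
      ENNReal.ofReal (∫ ξ, B ξ ^ 2 ∂ν) := by
  have : Nonempty (Fin P) := ⟨⟨0, hP⟩⟩
  obtain rfl : B = fun ξ => ⨆ k, |ψ k ξ| := funext hB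
  have lower_bound : ∀ G : α → ℝ, (∀ ξ, 0 < G ξ) → Integrable (fun ξ => G ξ ^ 2) ν →
      ENNReal.ofReal (∫ ξ, (⨆ k, |ψ k ξ|) ^ 2 ∂ν) ≤ coherence ν ψ G := fun G hG hGint =>
    ofReal_integral_iSup_abs_sq_le_coherence ν ψ (fun ξ => (hG ξ).ne') hGint
  refine ⟨fun G _ hG hGint => lower_bound G hG hGint, le_antisymm ?_ (lower_bound _ hBpos hBint)⟩
  calc coherence ν ψ (fun ξ => ⨆ k, |ψ k ξ|)
      ≤ 1 * ENNReal.ofReal (∫ ξ, (⨆ k, |ψ k ξ|) ^ 2 ∂ν) := by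
        unfold coherence
        gcongr
        exact iSup_sq_div_iSup_abs_sq_le_one ψ hBpos
    _ = _ := one_mul _

/-- Lower bound on the coherence parameter: for any positive envelope `G` with
`∫ G² dν < ∞`, `μ(G) = (sup_{k,ξ} ψ_k(ξ)²/G(ξ)²) · ∫ G² dν ≥ ∫ B² dν` where
`B ξ = max_k |ψ_k ξ|`, with equality when `G = B`. -/
theorem coherence_lower_bound
    {α : Type*} [MeasurableSpace α] (ν : Measure α) [IsProbabilityMeasure ν]
    (P : ℕ) (hP : 0 < P) (ψ : Fin P → α → ℝ)
    (hψ : ∀ k, Measurable (ψ k))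
    (B : α → ℝ) (hB : ∀ ξ, B ξ = ⨆ k : Fin P, |ψ k ξ|)
    (hBpos : ∀ ξ, 0 < B ξ)
    (hBint : Integrable (fun ξ => B ξ ^ 2) ν) :
    (∀ G : α → ℝ, Measurable G → (∀ ξ, 0 < G ξ) →
      Integrable (fun ξ => G ξ ^ 2) ν →
      ENNReal.ofReal (∫ ξ, B ξ ^ 2 ∂ν) ≤
        (⨆ k : Fin P, ⨆ ξ : α, ENNReal.ofReal (ψ k ξ ^ 2 / G ξ ^ 2)) *
          ENNReal.ofReal (∫ ξ, G ξ ^ 2 ∂ν)) ∧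
    (⨆ k : Fin P, ⨆ ξ : α, ENNReal.ofReal (ψ k ξ ^ 2 / B ξ ^ 2)) *
        ENNReal.ofReal (∫ ξ, B ξ ^ 2 ∂ν) =
      ENNReal.ofReal (∫ ξ, B ξ ^ 2 ∂ν) :=
  coherence_lower_bound_general ν P hP ψ B hB hBpos hBint
end
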